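/- If all weights are nonnegative and the weight of a single element e is changed to zero (other weights unchanged), then the minimum weight of a basis decreases by exactly the bottleneck weight min{x(e), μ_e(x)} of e under the original weighting x. -/

import Mathlib

/-
Let `B` be an `x`-optimal base and `x'` the weighting with `x' e = 0`.
If `e ∈ B`, then `B` itself costs `x e` less under `x'`; otherwise `e` closes a fundamental
circuit with `B`, and exchanging `e` for the heaviest other element `f` of that circuit saves
`x f ≥ μ_e(x)`. Conversely, if an `x'`-optimal base `B'` avoids `e`, nothing is gained; if it
contains `e`, the `x`-weight of `B'` exceeds its `x'`-weight by `x e`, and exchanging `e` for an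
element of a circuit attaining `μ_e(x)` costs at most `μ_e(x)`.
-/

open Matroid Set

variable {α : Type*}

/-- A circuit of a matroid: a minimal dependent set. -/
def Matroid.PaperIsCircuit (M : Matroid α) (C : Set α) : Prop :=
  M.Dep C ∧ ∀ ⦃D⦄, D ⊂ C → M.Indep D

/-- Looplessness in the sense of the paper: no element is a loop
(every singleton of the ground set is independent) and no element is a
coloop (no element lies in all bases). -/
def Matroid.PaperLoopless (M : Matroid α) : Prop :=
  ∀ e ∈ M.E, M.Indep {e} ∧ ∃ B, M.IsBase B ∧ e ∉ B

/-- The weight `x(B)` of a set of ground elements. -/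
noncomputable def setWeight (x : α → ℝ) (B : Set α) : ℝ := ∑ᶠ e ∈ B, x e

/-- The min-max weight `μ_e(x)`: the minimum over circuits `C` containing `e`
of the maximum weight of an element of `C - e`. -/
noncomputable def muWeight (M : Matroid α) (x : α → ℝ) (e : α) : ℝ :=
  sInf {w | ∃ C, M.PaperIsCircuit C ∧ e ∈ C ∧ w = sSup (x '' (C \ {e}))}

/-- The bottleneck weight `b_e(x) = min {x(e), μ_e(x)}`. -/
noncomputable def bottleneck (M : Matroid α) (x : α → ℝ) (e : α) : ℝ :=
  min (x e) (muWeight M x e)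

/-- The minimum weight of a basis of `M`. -/
noncomputable def mwb (M : Matroid α) (x : α → ℝ) : ℝ :=
  sInf {w | ∃ B, M.IsBase B ∧ w = setWeight x B}

/-- `B` is an `x`-optimal basis of `M`. -/
def IsOptimalBase (M : Matroid α) (x : α → ℝ) (B : Set α) : Prop :=
  M.IsBase B ∧ ∀ B', M.IsBase B' → setWeight x B ≤ setWeight x B'

/-- Deletion of a single element. -/
noncomputable def Matroid.del (M : Matroid α) (e : α) : Matroid α :=
  M ↾ (M.E \ {e})

/-- Contraction of a single element, defined by duality: `M/e = (M✶ \ e)✶`. -/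
noncomputable def Matroid.con (M : Matroid α) (e : α) : Matroid α :=
  ((M✶ ↾ (M.E \ {e}))✶)

open Function

section SetWeight

variable {B : Set α} {e f : α}

lemma setWeight_insert (x : α → ℝ) (hf : f ∉ B) (hB : B.Finite) :
    setWeight x (insert f B) = x f + setWeight x B :=
  finsum_mem_insert x hf hB

lemma setWeight_sdiff_singleton (x : α → ℝ) (he : e ∈ B) (hB : B.Finite) :
    setWeight x (B \ {e}) = setWeight x B - x e := by
  have h := setWeight_insert x (notMem_sdiff_of_mem (mem_singleton e))
    (hB.subset sdiff_subset)
  rw [insert_sdiff_self_of_mem he] at h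
  linarith

lemma setWeight_insert_sdiff_singleton (x : α → ℝ) (hf : f ∈ B) (he : e ∉ B)
    (hB : B.Finite) :
    setWeight x (insert e (B \ {f})) = setWeight x B + x e - x f := by
  rw [setWeight_insert x (fun h => he h.1) (hB.subset sdiff_subset),
    setWeight_sdiff_singleton x hf hB]
  ring

variable [DecidableEq α]

lemma setWeight_update_zero_of_notMem (x : α → ℝ) (he : e ∉ B) :
    setWeight (update x e 0) B = setWeight x B :=
  finsum_mem_congr rfl fun _ hi => update_of_ne (ne_of_mem_of_not_mem hi he) 0 x

lemma setWeight_update_zero_of_mem (x : α → ℝ) (he : e ∈ B) (hB : B.Finite) :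
    setWeight (update x e 0) B = setWeight x B - x e := by
  have heBe : e ∉ B \ {e} := notMem_sdiff_of_mem (mem_singleton e)
  have h := setWeight_insert (update x e 0) heBe (hB.subset sdiff_subset)
  rw [insert_sdiff_self_of_mem he, update_self, setWeight_update_zero_of_notMem x heBe,
    setWeight_sdiff_singleton x he hB] at h
  linarith

end SetWeight

namespace Matroid

variable {M : Matroid α} {B C : Set α} {e f : α}

lemma finite_setOf_isBase (M : Matroid α) [M.Finite] : {B | M.IsBase B}.Finite :=
  M.ground_finite.finite_subsets.subset fun _ hB => hB.subset_ground

lemma finite_setOf_isCircuit_mem (M : Matroid α) [M.Finite] (e : α) :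
    {C | M.IsCircuit C ∧ e ∈ C}.Finite :=
  M.ground_finite.finite_subsets.subset fun _ hC => hC.1.subset_ground

lemma paperIsCircuit_iff : M.PaperIsCircuit C ↔ M.IsCircuit C :=
  isCircuit_iff_forall_ssubset.symm

lemma IsBase.insert_sdiff_singleton_isBase_of_mem_fundCircuit (hB : M.IsBase B) (heE : e ∈ M.E)
    (heB : e ∉ B) (hf : f ∈ M.fundCircuit e B) (hfe : f ≠ e) :
    M.IsBase (insert e (B \ {f})) := by
  have hfB : f ∈ B := (M.fundCircuit_subset_insert e B hf).resolve_left hfe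
  have hI := (hB.indep.mem_fundCircuit_iff (by rwa [hB.closure_eq]) heB).1 hf
  rw [insert_sdiff_singleton_comm hfe.symm]
  exact hB.exchange_isBase_of_indep' hfB heB hI

lemma IsBase.exists_insert_sdiff_singleton_isBase_of_isCircuit (hB : M.IsBase B) (heB : e ∈ B)
    (hC : M.IsCircuit C) (heC : e ∈ C) :
    ∃ f ∈ C \ {e}, f ∉ B ∧ M.IsBase (insert f (B \ {e})) := by
  have hCe : ¬ C \ {e} ⊆ M.closure (B \ {e}) := fun hsub =>
    hB.indep.notMem_closure_sdiff_of_mem heB <| M.closure_subset_closure_of_subset_closure hsub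
      (hC.mem_closure_sdiff_singleton_of_mem heC)
  obtain ⟨f, hf, hfcl⟩ := not_subset.1 hCe
  refine ⟨f, hf, fun hfB => hfcl ?_, hB.exchange_base_of_notMem_closure heB hfcl
    (hC.subset_ground hf.1)⟩
  exact M.subset_closure _ (sdiff_subset.trans hB.subset_ground) ⟨hfB, hf.2⟩

end Matroid

section Weights

variable {M : Matroid α} {B C : Set α} {e : α}

lemma mwb_eq_sInf_image (M : Matroid α) (x : α → ℝ) :
    mwb M x = sInf (setWeight x '' {B | M.IsBase B}) := by
  simp only [mwb, image, mem_ofPred_eq, eq_comm]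

lemma muWeight_eq_sInf_image (M : Matroid α) (x : α → ℝ) (e : α) :
    muWeight M x e =
      sInf ((fun C => sSup (x '' (C \ {e}))) '' {C | M.IsCircuit C ∧ e ∈ C}) := by
  simp only [muWeight, paperIsCircuit_iff, image, eq_comm, and_assoc, mem_ofPred_eq]

lemma muWeight_nonneg {x : α → ℝ} (hx : ∀ f, 0 ≤ x f) : 0 ≤ muWeight M x e :=
  Real.sInf_nonneg <| by
    rintro _ ⟨C, -, -, rfl⟩
    exact Real.sSup_nonneg <| by rintro _ ⟨f, -, rfl⟩; exact hx f

lemma bottleneck_nonneg {x : α → ℝ} (hx : ∀ f, 0 ≤ x f) : 0 ≤ bottleneck M x e :=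
  le_min (hx e) (muWeight_nonneg hx)

variable (M) [M.Finite] (x : α → ℝ)

lemma mwb_le_setWeight (hB : M.IsBase B) : mwb M x ≤ setWeight x B := by
  rw [mwb_eq_sInf_image]
  exact csInf_le (M.finite_setOf_isBase.image _).bddBelow (mem_image_of_mem _ hB)

lemma exists_isBase_setWeight_eq_mwb : ∃ B, M.IsBase B ∧ setWeight x B = mwb M x := by
  rw [mwb_eq_sInf_image]
  exact (Nonempty.image _ M.exists_isBase).csInf_mem (M.finite_setOf_isBase.image _)

lemma muWeight_le (hC : M.IsCircuit C) (heC : e ∈ C) :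
    muWeight M x e ≤ sSup (x '' (C \ {e})) := by
  rw [muWeight_eq_sInf_image]
  exact csInf_le ((M.finite_setOf_isCircuit_mem e).image _).bddBelow
    (mem_image_of_mem _ ⟨hC, heC⟩)

lemma exists_isCircuit_muWeight_eq (he : e ∈ M.E) (hcol : ¬ M.IsColoop e) :
    ∃ C, M.IsCircuit C ∧ e ∈ C ∧ muWeight M x e = sSup (x '' (C \ {e})) := by
  obtain ⟨C, hC, heC⟩ : ∃ C, M.IsCircuit C ∧ e ∈ C := by
    simpa [isColoop_iff_forall_notMem_isCircuit he] using hcol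
  rw [muWeight_eq_sInf_image]
  have hne : {C | M.IsCircuit C ∧ e ∈ C}.Nonempty := ⟨C, hC, heC⟩
  obtain ⟨C', ⟨hC', heC'⟩, hC'x⟩ := (hne.image fun C => sSup (x '' (C \ {e}))).csInf_mem
    ((M.finite_setOf_isCircuit_mem e).image _)
  exact ⟨C', hC', heC', hC'x.symm⟩

variable [DecidableEq α]

lemma mwb_update_zero_add_bottleneck_le (he : M.IsNonloop e) :
    mwb M (update x e 0) + bottleneck M x e ≤ mwb M x := by
  obtain ⟨B, hB, hBx⟩ := exists_isBase_setWeight_eq_mwb M x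
  by_cases heB : e ∈ B
  · calc mwb M (update x e 0) + bottleneck M x e
        ≤ setWeight (update x e 0) B + x e :=
          add_le_add (mwb_le_setWeight M _ hB) (min_le_left _ _)
      _ = mwb M x := by rw [setWeight_update_zero_of_mem x heB hB.finite, hBx]; ring
  have hC := hB.fundCircuit_isCircuit he.mem_ground heB
  have hCe : (M.fundCircuit e B \ {e}).Nonempty := nonempty_iff_ne_empty.2 fun h =>
    hC.not_indep (he.indep.subset (sdiff_eq_empty.1 h))
  obtain ⟨f, hf, hfx⟩ := (hCe.image x).csSup_mem ((hC.finite.subset sdiff_subset).image x)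
  have hfe : f ≠ e := hf.2
  have hfB : f ∈ B := (M.fundCircuit_subset_insert e B hf.1).resolve_left hfe
  have hB' := hB.insert_sdiff_singleton_isBase_of_mem_fundCircuit he.mem_ground heB hf.1 hfe
  calc mwb M (update x e 0) + bottleneck M x e
      ≤ setWeight (update x e 0) (insert e (B \ {f})) + muWeight M x e :=
        add_le_add (mwb_le_setWeight M _ hB') (min_le_right _ _)
    _ ≤ setWeight (update x e 0) (insert e (B \ {f})) + x f := by
        grw [muWeight_le M x hC (M.mem_fundCircuit e B), hfx]
    _ = mwb M x := by
        rw [setWeight_insert_sdiff_singleton _ hfB heB hB.finite,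
          setWeight_update_zero_of_notMem x heB, update_self, update_of_ne hfe, hBx]
        ring

lemma mwb_le_mwb_update_zero_add_bottleneck (hx : ∀ f, 0 ≤ x f) (he : e ∈ M.E)
    (hcol : ¬ M.IsColoop e) : mwb M x ≤ mwb M (update x e 0) + bottleneck M x e := by
  obtain ⟨B, hB, hBx⟩ := exists_isBase_setWeight_eq_mwb M (update x e 0)
  by_cases heB : e ∈ B
  · have hBw := setWeight_update_zero_of_mem x heB hB.finite
    obtain ⟨C, hC, heC, hμ⟩ := exists_isCircuit_muWeight_eq M x he hcol
    obtain ⟨f, hf, hfB, hB'⟩ := hB.exists_insert_sdiff_singleton_isBase_of_isCircuit heB hC heC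
    have hfμ : x f ≤ muWeight M x e :=
      hμ ▸ le_csSup ((hC.finite.subset sdiff_subset).image x).bddAbove (mem_image_of_mem x hf)
    rw [bottleneck, ← min_add_add_left]
    refine le_min (by linarith [mwb_le_setWeight M x hB]) ?_
    calc mwb M x ≤ setWeight x (insert f (B \ {e})) := mwb_le_setWeight M x hB'
      _ = mwb M (update x e 0) + x f := by
        rw [setWeight_insert_sdiff_singleton x heB hfB hB.finite]; linarith
      _ ≤ mwb M (update x e 0) + muWeight M x e := by gcongr
  calc mwb M x ≤ setWeight x B := mwb_le_setWeight M x hB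
    _ = mwb M (update x e 0) := by rw [← hBx, setWeight_update_zero_of_notMem x heB]
    _ ≤ mwb M (update x e 0) + bottleneck M x e := le_add_of_nonneg_right (bottleneck_nonneg hx)

end Weights

/-- dropping one nonnegative weight to zero decreases the
optimal value by exactly the bottleneck weight of that element. -/
theorem stmt13 [DecidableEq α] (M : Matroid α) [M.Finite] (hM : M.PaperLoopless)
    (x : α → ℝ) (hx : ∀ f, 0 ≤ x f) {e : α} (he : e ∈ M.E) :
    mwb M x - mwb M (Function.update x e 0) = bottleneck M x e := by
  obtain ⟨hnonloop, B, hB, heB⟩ := hM e he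
  have hcol : ¬ M.IsColoop e := fun h => heB (h.mem_of_isBase hB)
  have hle := mwb_update_zero_add_bottleneck_le M x (indep_singleton.1 hnonloop)
  have hge := mwb_le_mwb_update_zero_add_bottleneck M x hx he hcol
  linarith
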